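/- RPL₀ is refutationally complete: for every quantifier-free first-order formula F whose universal closure ∀F is unsatisfiable, there exists an RPL₀-derivation of the empty sequent ⊢ from axioms of the form ⊢ Fϑ, where each ϑ is a renaming of the variables of F. -/

import Mathlib

namespace RPL0

/-- First-order terms over variables `V` and function symbols `Fn` with arities `far`. -/
inductive Tm (V : Type) (Fn : Type) (far : Fn → ℕ) : Type where
  | var : V → Tm V Fn far
  | app : (f : Fn) → (Fin (far f) → Tm V Fn far) → Tm V Fn far

variable {V Fn Pr : Type} {far : Fn → ℕ} {par : Pr → ℕ}

def Tm.subst (θ : V → Tm V Fn far) : Tm V Fn far → Tm V Fn far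
  | .var v => θ v
  | .app f ts => .app f fun i => (ts i).subst θ

def Tm.HasVar (v : V) : Tm V Fn far → Prop
  | .var w => w = v
  | .app _ ts => ∃ i, (ts i).HasVar v

/-- Quantifier-free first-order formulas `PL₀` over predicate symbols `Pr` with arities `par`. -/
inductive Fm (V : Type) (Fn : Type) (far : Fn → ℕ) (Pr : Type) (par : Pr → ℕ) : Type where
  | atom : (P : Pr) → (Fin (par P) → Tm V Fn far) → Fm V Fn far Pr par
  | not : Fm V Fn far Pr par → Fm V Fn far Pr par
  | and : Fm V Fn far Pr par → Fm V Fn far Pr par → Fm V Fn far Pr par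
  | or : Fm V Fn far Pr par → Fm V Fn far Pr par → Fm V Fn far Pr par

def Fm.subst (θ : V → Tm V Fn far) : Fm V Fn far Pr par → Fm V Fn far Pr par
  | .atom P ts => .atom P fun i => (ts i).subst θ
  | .not A => .not (A.subst θ)
  | .and A B => .and (A.subst θ) (B.subst θ)
  | .or A B => .or (A.subst θ) (B.subst θ)

def Fm.HasVar (v : V) : Fm V Fn far Pr par → Prop
  | .atom _ ts => ∃ i, (ts i).HasVar v
  | .not A => A.HasVar v
  | .and A B => A.HasVar v ∨ B.HasVar v
  | .or A B => A.HasVar v ∨ B.HasVar v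

/-- `θ` unifies the set (multiset) of formulas `S`. -/
def Unifies (θ : V → Tm V Fn far) (S : Multiset (Fm V Fn far Pr par)) : Prop :=
  ∀ A ∈ S, ∀ B ∈ S, Fm.subst θ A = Fm.subst θ B

/-- `θ` is a most general unifier of the formulas in `S`. -/
def IsMGU (θ : V → Tm V Fn far) (S : Multiset (Fm V Fn far Pr par)) : Prop :=
  Unifies θ S ∧ ∀ θ' : V → Tm V Fn far, Unifies θ' S →
    ∃ η : V → Tm V Fn far, ∀ v, (θ v).subst η = θ' v

/-- Derivability in the calculus `RPL₀` from axioms `⊢ F` for `F ∈ Ax`.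
Sequents are pairs of multisets of `PL₀`-formulas. -/
inductive Der (Ax : Set (Fm V Fn far Pr par)) :
    Multiset (Fm V Fn far Pr par) → Multiset (Fm V Fn far Pr par) → Prop where
  | ax {A : Fm V Fn far Pr par} : A ∈ Ax → Der Ax 0 {A}
  | andr1 {Γ Δ : Multiset (Fm V Fn far Pr par)} {A B : Fm V Fn far Pr par} :
      Der Ax Γ (A.and B ::ₘ Δ) → Der Ax Γ (A ::ₘ Δ)
  | andr2 {Γ Δ : Multiset (Fm V Fn far Pr par)} {A B : Fm V Fn far Pr par} :
      Der Ax Γ (A.and B ::ₘ Δ) → Der Ax Γ (B ::ₘ Δ)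
  | andl {Γ Δ : Multiset (Fm V Fn far Pr par)} {A B : Fm V Fn far Pr par} :
      Der Ax (A.and B ::ₘ Γ) Δ → Der Ax (A ::ₘ B ::ₘ Γ) Δ
  | orr {Γ Δ : Multiset (Fm V Fn far Pr par)} {A B : Fm V Fn far Pr par} :
      Der Ax Γ (A.or B ::ₘ Δ) → Der Ax Γ (A ::ₘ B ::ₘ Δ)
  | orl1 {Γ Δ : Multiset (Fm V Fn far Pr par)} {A B : Fm V Fn far Pr par} :
      Der Ax (A.or B ::ₘ Γ) Δ → Der Ax (A ::ₘ Γ) Δ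
  | orl2 {Γ Δ : Multiset (Fm V Fn far Pr par)} {A B : Fm V Fn far Pr par} :
      Der Ax (A.or B ::ₘ Γ) Δ → Der Ax (B ::ₘ Γ) Δ
  | negr {Γ Δ : Multiset (Fm V Fn far Pr par)} {A : Fm V Fn far Pr par} :
      Der Ax Γ (A.not ::ₘ Δ) → Der Ax (A ::ₘ Γ) Δ
  | negl {Γ Δ : Multiset (Fm V Fn far Pr par)} {A : Fm V Fn far Pr par} :
      Der Ax (A.not ::ₘ Γ) Δ → Der Ax Γ (A ::ₘ Δ)
  | res {Γ Δ Γ₂ Λ : Multiset (Fm V Fn far Pr par)} (As Bs : Multiset (Fm V Fn far Pr par))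
      (θ : V → Tm V Fn far) :
      As ≠ 0 → Bs ≠ 0 →
      (∀ v : V, (∃ A ∈ As, Fm.HasVar v A) → ¬ ∃ B ∈ Bs, Fm.HasVar v B) →
      IsMGU θ (As + Bs) →
      Der Ax Γ (Δ + As) → Der Ax (Bs + Γ₂) Λ →
      Der Ax (Γ.map (Fm.subst θ) + Γ₂.map (Fm.subst θ)) (Δ.map (Fm.subst θ) + Λ.map (Fm.subst θ))

variable {α : Type}

def Tm.eval (fI : (f : Fn) → (Fin (far f) → α) → α) (v : V → α) : Tm V Fn far → α
  | .var x => v x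
  | .app f ts => fI f fun i => (ts i).eval fI v

def Fm.truth (fI : (f : Fn) → (Fin (far f) → α) → α)
    (pI : (P : Pr) → (Fin (par P) → α) → Prop) (v : V → α) : Fm V Fn far Pr par → Prop
  | .atom P ts => pI P fun i => (ts i).eval fI v
  | .not A => ¬ A.truth fI pI v
  | .and A B => A.truth fI pI v ∧ B.truth fI pI v
  | .or A B => A.truth fI pI v ∨ B.truth fI pI v

/-- A structure satisfies the universal closure of the sequent `Γ ⊢ Δ`,
read as the implication `⋀Γ → ⋁Δ`. -/
def SeqHolds (fI : (f : Fn) → (Fin (far f) → α) → α)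
    (pI : (P : Pr) → (Fin (par P) → α) → Prop)
    (Γ Δ : Multiset (Fm V Fn far Pr par)) : Prop :=
  ∀ v : V → α, (∀ A ∈ Γ, Fm.truth fI pI v A) → ∃ B ∈ Δ, Fm.truth fI pI v B

end RPL0

/-!
If `∀F` is unsatisfiable, then so is, propositionally, the set of clauses that the logical rules
of `RPL₀` produce from the instances `Fσ`: a valuation `g` of the atomic formulas determines a term
model, which falsifies some instance `Fσ`. By compactness a finite subset is unsatisfiable, and
Davis–Putnam elimination of its atoms yields a propositional resolution refutation of it.
This refutation lifts to `RPL₀`: each clause it derives is an instance of a clause all of whose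
renamings are derivable from renamed copies of `F`. To lift a resolution step, rename the two
premises apart; their instantiating substitutions then combine into a unifier of the resolved
atoms, so a most general unifier (which exists by Robinson's algorithm) performs the step in
`RPL₀`. The empty clause is an instance only of itself.
-/

theorem Multiset.exists_eq_add_of_map_eq_add {α β : Type*} {f : α → β} {s : Multiset α}
    {t u : Multiset β} (h : s.map f = t + u) :
    ∃ s₁ s₂, s = s₁ + s₂ ∧ s₁.map f = t ∧ s₂.map f = u := by
  classical
  induction t using Multiset.induction_on generalizing s with
  | empty => exact ⟨0, s, by simp, by simp, by simpa using h⟩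
  | cons b t ih =>
    obtain ⟨a, ha, rfl, hs⟩ := (Multiset.map_eq_cons f s _ b).2 (h.trans (Multiset.cons_add b t u))
    obtain ⟨s₁, s₂, hs', rfl, rfl⟩ := ih hs
    refine ⟨a ::ₘ s₁, s₂, ?_, by simp, rfl⟩
    rw [Multiset.cons_add, ← hs', Multiset.cons_erase ha]

namespace RPL0

open Pointwise

variable {V Fn Pr : Type} {far : Fn → ℕ} {par : Pr → ℕ}

/-! ### Substitutions -/

theorem Tm.subst_subst (a b : V → Tm V Fn far) (t : Tm V Fn far) :
    (t.subst a).subst b = t.subst fun v => (a v).subst b := by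
  induction t with
  | var v => rfl
  | app f ts ih => exact congrArg _ (funext ih)

theorem Tm.subst_var (t : Tm V Fn far) : t.subst Tm.var = t := by
  induction t with
  | var v => rfl
  | app f ts ih => exact congrArg _ (funext ih)

theorem Tm.subst_congr {a b : V → Tm V Fn far} {t : Tm V Fn far}
    (h : ∀ v, t.HasVar v → a v = b v) : t.subst a = t.subst b := by
  induction t with
  | var v => exact h v rfl
  | app f ts ih => exact congrArg _ (funext fun i => ih i fun v hv => h v ⟨i, hv⟩)

theorem Tm.hasVar_subst {w : V} {θ : V → Tm V Fn far} {t : Tm V Fn far}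
    (h : (t.subst θ).HasVar w) : ∃ v, t.HasVar v ∧ (θ v).HasVar w := by
  induction t with
  | var v => exact ⟨v, rfl, h⟩
  | app f ts ih =>
    obtain ⟨i, hi⟩ := h
    obtain ⟨v, hv, hvw⟩ := ih i hi
    exact ⟨v, ⟨i, hv⟩, hvw⟩

theorem Fm.subst_subst (a b : V → Tm V Fn far) (A : Fm V Fn far Pr par) :
    (A.subst a).subst b = A.subst fun v => (a v).subst b := by
  induction A with
  | atom P ts => simp only [Fm.subst, Tm.subst_subst]
  | not A ih => simp only [Fm.subst, ih]
  | and A B ihA ihB => simp only [Fm.subst, ihA, ihB]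
  | or A B ihA ihB => simp only [Fm.subst, ihA, ihB]

theorem Fm.subst_comp_subst (θ η : V → Tm V Fn far) :
    Fm.subst (Pr := Pr) (par := par) η ∘ Fm.subst θ = Fm.subst fun v => (θ v).subst η :=
  funext (Fm.subst_subst θ η)

theorem Fm.hasVar_subst {w : V} {θ : V → Tm V Fn far} {A : Fm V Fn far Pr par}
    (h : (A.subst θ).HasVar w) : ∃ v, A.HasVar v ∧ (θ v).HasVar w := by
  induction A with
  | atom P ts =>
    obtain ⟨i, hi⟩ := h
    obtain ⟨v, hv, hvw⟩ := Tm.hasVar_subst hi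
    exact ⟨v, ⟨i, hv⟩, hvw⟩
  | not A ih => exact ih h
  | and A B ihA ihB | or A B ihA ihB =>
    rcases h with h | h
    · obtain ⟨v, hv, hvw⟩ := ihA h
      exact ⟨v, .inl hv, hvw⟩
    · obtain ⟨v, hv, hvw⟩ := ihB h
      exact ⟨v, .inr hv, hvw⟩

def ren (ρ : V → V) : V → Tm V Fn far := fun v => .var (ρ v)

theorem Fm.subst_ren_subst (ρ : V → V) (σ : V → Tm V Fn far) (A : Fm V Fn far Pr par) :
    (A.subst (ren ρ)).subst σ = A.subst (σ ∘ ρ) :=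
  Fm.subst_subst _ _ A

theorem Fm.mem_range_of_hasVar_subst_ren {w : V} {ρ : V → V} {A : Fm V Fn far Pr par}
    (h : (A.subst (ren ρ)).HasVar w) : w ∈ Set.range ρ := by
  obtain ⟨v, -, hvw⟩ := Fm.hasVar_subst h
  exact ⟨v, hvw⟩

/-! ### Unification -/

def Tm.size : Tm V Fn far → ℕ
  | .var _ => 1
  | .app _ ts => 1 + ∑ i, (ts i).size

theorem Tm.size_pos (t : Tm V Fn far) : 0 < t.size := by
  cases t <;> simp [Tm.size]

theorem Tm.size_lt_size_app {f : Fn} (ts : Fin (far f) → Tm V Fn far) (i : Fin (far f)) :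
    (ts i).size < (Tm.app f ts).size := by
  have : (ts i).size ≤ ∑ j, (ts j).size :=
    Finset.single_le_sum (f := fun j => (ts j).size) (by simp) (Finset.mem_univ i)
  simp only [Tm.size]
  omega

theorem Tm.size_le_size_subst (σ : V → Tm V Fn far) {x : V} {t : Tm V Fn far}
    (h : t.HasVar x) : (σ x).size ≤ (t.subst σ).size := by
  induction t with
  | var w => cases h; exact le_rfl
  | app f ts ih =>
    obtain ⟨i, hi⟩ := h
    exact (ih i hi).trans (Tm.size_lt_size_app (fun j => (ts j).subst σ) i).le

theorem Tm.subst_ne_of_hasVar (σ : V → Tm V Fn far) {x : V} {t : Tm V Fn far}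
    (hx : t.HasVar x) (ht : t ≠ .var x) : σ x ≠ t.subst σ := by
  cases t with
  | var y => cases hx; exact absurd rfl ht
  | app f ts =>
    obtain ⟨i, hi⟩ := hx
    refine ne_of_apply_ne Tm.size (Nat.ne_of_lt ?_)
    exact (Tm.size_le_size_subst σ hi).trans_lt (Tm.size_lt_size_app (fun j => (ts j).subst σ) i)

theorem Tm.finite_setOf_hasVar (t : Tm V Fn far) : {v | t.HasVar v}.Finite := by
  induction t with
  | var w => simp [Tm.HasVar]
  | app f ts ih => simpa [Tm.HasVar, Set.ofPred_exists] using Set.finite_iUnion ih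

def unifiers (E : List (Tm V Fn far × Tm V Fn far)) : Set (V → Tm V Fn far) :=
  {σ | ∀ e ∈ E, e.1.subst σ = e.2.subst σ}

def IsMostGeneralIn (θ : V → Tm V Fn far) (U : Set (V → Tm V Fn far)) : Prop :=
  θ ∈ U ∧ ∀ σ ∈ U, ∃ η : V → Tm V Fn far, ∀ v, (θ v).subst η = σ v

def eqnsVars (E : List (Tm V Fn far × Tm V Fn far)) : Set V :=
  {v | ∃ e ∈ E, e.1.HasVar v ∨ e.2.HasVar v}

def eqnsSize (E : List (Tm V Fn far × Tm V Fn far)) : ℕ :=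
  (E.map fun e => e.1.size + e.2.size).sum

section Equations

variable {x : V} {t u w : Tm V Fn far} {E : List (Tm V Fn far × Tm V Fn far)}

theorem unifiers_cons :
    unifiers ((t, u) :: E) = {σ | t.subst σ = u.subst σ} ∩ unifiers E := by
  ext σ; simp [unifiers]

theorem unifiers_append (E' : List (Tm V Fn far × Tm V Fn far)) :
    unifiers (E ++ E') = unifiers E ∩ unifiers E' := by
  ext σ; simp [unifiers, or_imp, forall_and]

theorem unifiers_cons_swap : unifiers ((t, u) :: E) = unifiers ((u, t) :: E) := by
  simp only [unifiers_cons, eq_comm]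

theorem unifiers_app_app (f : Fn) (ts ss : Fin (far f) → Tm V Fn far) :
    unifiers ((.app f ts, .app f ss) :: E) =
      unifiers ((List.ofFn fun i => (ts i, ss i)) ++ E) := by
  ext σ
  simp only [unifiers_cons, unifiers_append, Set.mem_inter_iff, Set.mem_ofPred_eq, Tm.subst,
    Tm.app.injEq, heq_eq_eq, true_and, funext_iff]
  simp [unifiers]

theorem eqnsVars_finite (E : List (Tm V Fn far × Tm V Fn far)) : (eqnsVars E).Finite := by
  induction E with
  | nil => simp [eqnsVars]
  | cons e E ih =>
    have : eqnsVars (e :: E) = ({v | e.1.HasVar v} ∪ {v | e.2.HasVar v}) ∪ eqnsVars E := by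
      ext v; simp [eqnsVars]
    rw [this]
    exact ((Tm.finite_setOf_hasVar _).union (Tm.finite_setOf_hasVar _)).union ih

theorem eqnsVars_cons_swap : eqnsVars ((t, u) :: E) = eqnsVars ((u, t) :: E) := by
  ext v; simp [eqnsVars, or_comm]

theorem eqnsVars_subset_cons (e : Tm V Fn far × Tm V Fn far) :
    eqnsVars E ⊆ eqnsVars (e :: E) := by
  rintro v ⟨e', he', hv⟩
  exact ⟨e', List.mem_cons_of_mem _ he', hv⟩

theorem eqnsVars_app_app_subset (f : Fn) (ts ss : Fin (far f) → Tm V Fn far) :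
    eqnsVars ((List.ofFn fun i => (ts i, ss i)) ++ E) ⊆ eqnsVars ((.app f ts, .app f ss) :: E) := by
  rintro v ⟨e, he, hv⟩
  rcases List.mem_append.1 he with he | he
  · obtain ⟨i, rfl⟩ := List.mem_ofFn.1 he
    exact ⟨_, List.mem_cons_self, hv.imp (⟨i, ·⟩) (⟨i, ·⟩)⟩
  · exact ⟨e, List.mem_cons_of_mem _ he, hv⟩

theorem eqnsSize_app_app_lt (f : Fn) (ts ss : Fin (far f) → Tm V Fn far) :
    eqnsSize ((List.ofFn fun i => (ts i, ss i)) ++ E) < eqnsSize ((.app f ts, .app f ss) :: E) := by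
  simp only [eqnsSize, List.map_append, List.map_ofFn, List.sum_append, List.sum_ofFn,
    Function.comp_apply, Finset.sum_add_distrib, List.map_cons, Tm.size, List.sum_cons]
  omega

theorem eqnsSize_lt_cons : eqnsSize E < eqnsSize ((t, u) :: E) := by
  simp only [eqnsSize, List.map_cons, List.sum_cons]
  have := t.size_pos
  omega

def substEqns (δ : V → Tm V Fn far) (E : List (Tm V Fn far × Tm V Fn far)) :
    List (Tm V Fn far × Tm V Fn far) :=
  E.map fun e => (e.1.subst δ, e.2.subst δ)

theorem mem_unifiers_substEqns {δ σ : V → Tm V Fn far} :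
    σ ∈ unifiers (substEqns δ E) ↔ (fun v => (δ v).subst σ) ∈ unifiers E := by
  simp only [unifiers, substEqns, Set.mem_ofPred_eq, List.forall_mem_map, Tm.subst_subst]

variable [DecidableEq V]

theorem subst_update_eq_self {σ : V → Tm V Fn far} (hσ : σ x = w.subst σ) :
    (fun v => (Function.update Tm.var x w v).subst σ) = σ := by
  funext v
  by_cases hv : v = x
  · subst hv; simp [hσ]
  · simp [hv, Tm.subst]

theorem eqnsVars_substEqns_update_subset (hxw : ¬ w.HasVar x) :
    eqnsVars (substEqns (Function.update Tm.var x w) E) ⊆ eqnsVars ((.var x, w) :: E) \ {x} := by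
  rintro v ⟨_, he', hv⟩
  obtain ⟨e, he, rfl⟩ := List.mem_map.1 he'
  obtain ⟨v₀, hv₀, hv₀v⟩ : ∃ v₀, (e.1.HasVar v₀ ∨ e.2.HasVar v₀) ∧
      (Function.update Tm.var x w v₀).HasVar v := by
    rcases hv with h | h
    · obtain ⟨v₀, h₁, h₂⟩ := Tm.hasVar_subst h; exact ⟨v₀, .inl h₁, h₂⟩
    · obtain ⟨v₀, h₁, h₂⟩ := Tm.hasVar_subst h; exact ⟨v₀, .inr h₁, h₂⟩
  by_cases h : v₀ = x
  · subst h
    rw [Function.update_self] at hv₀v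
    exact ⟨⟨_, List.mem_cons_self, .inr hv₀v⟩, fun hvx => hxw (by rwa [← hvx])⟩
  · rw [Function.update_of_ne h] at hv₀v
    cases hv₀v
    exact ⟨⟨e, List.mem_cons_of_mem _ he, hv₀⟩, h⟩

theorem ncard_eqnsVars_substEqns_update_lt (hxw : ¬ w.HasVar x) :
    (eqnsVars (substEqns (Function.update Tm.var x w) E)).ncard <
      (eqnsVars ((.var x, w) :: E)).ncard := by
  have hfin := eqnsVars_finite ((.var x, w) :: E)
  refine (Set.ncard_le_ncard (eqnsVars_substEqns_update_subset hxw) hfin.sdiff).trans_lt ?_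
  exact Set.ncard_sdiff_singleton_lt_of_mem ⟨_, List.mem_cons_self, .inl rfl⟩ hfin

theorem mem_unifiers_substEqns_update {σ : V → Tm V Fn far}
    (hσ : σ ∈ unifiers ((.var x, w) :: E)) :
    σ ∈ unifiers (substEqns (Function.update Tm.var x w) E) := by
  rw [unifiers_cons] at hσ
  rw [mem_unifiers_substEqns, subst_update_eq_self hσ.1]
  exact hσ.2

theorem IsMostGeneralIn.of_substEqns_update (hxw : ¬ w.HasVar x) {θ : V → Tm V Fn far}
    (hθ : IsMostGeneralIn θ (unifiers (substEqns (Function.update Tm.var x w) E))) :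
    IsMostGeneralIn (fun v => (Function.update Tm.var x w v).subst θ)
      (unifiers ((.var x, w) :: E)) := by
  have hw : w.subst (Function.update Tm.var x w) = w := by
    conv_rhs => rw [← Tm.subst_var w]
    exact Tm.subst_congr fun v hv => Function.update_of_ne (fun h => hxw (by rwa [← h])) _ _
  refine ⟨?_, fun σ hσ => ?_⟩
  · rw [unifiers_cons]
    refine ⟨?_, mem_unifiers_substEqns.1 hθ.1⟩
    show (Function.update Tm.var x w x).subst θ = _
    rw [← Tm.subst_subst, hw, Function.update_self]
  · obtain ⟨η, hη⟩ := hθ.2 σ (mem_unifiers_substEqns_update hσ)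
    refine ⟨η, fun v => ?_⟩
    rw [Tm.subst_subst, funext hη]
    exact congrFun (subst_update_eq_self (unifiers_cons ▸ hσ).1) v

end Equations

noncomputable def eqnsMeasure (E : List (Tm V Fn far × Tm V Fn far)) : ℕ ×ₗ ℕ :=
  toLex ((eqnsVars E).ncard, eqnsSize E)

theorem eqnsMeasure_lt_of_subset {E E' : List (Tm V Fn far × Tm V Fn far)}
    (hvars : eqnsVars E' ⊆ eqnsVars E) (hsize : eqnsSize E' < eqnsSize E) :
    eqnsMeasure E' < eqnsMeasure E :=
  Prod.Lex.toLex_strictMono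
    (Prod.mk_lt_mk_of_le_of_lt (Set.ncard_le_ncard hvars (eqnsVars_finite E)) hsize)

theorem exists_isMostGeneralIn_unifiers (E : List (Tm V Fn far × Tm V Fn far))
    (hE : (unifiers E).Nonempty) : ∃ θ, IsMostGeneralIn θ (unifiers E) := by
  classical
  induction E using (InvImage.wf eqnsMeasure wellFounded_lt).induction with | _ E ih
  obtain ⟨σ, hσ⟩ := hE
  rcases E with _ | ⟨⟨t, u⟩, E⟩
  · exact ⟨Tm.var, by simp [unifiers], fun σ _ => ⟨σ, fun _ => rfl⟩⟩
  -- the solved form `x = w` with `x ∉ w`, in either orientation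
  have elim : ∀ x w, ¬ w.HasVar x → eqnsVars ((.var x, w) :: E) = eqnsVars ((t, u) :: E) →
      unifiers ((.var x, w) :: E) = unifiers ((t, u) :: E) →
      ∃ θ, IsMostGeneralIn θ (unifiers ((t, u) :: E)) := by
    intro x w hx hvars hunif
    rw [← hunif] at hσ ⊢
    obtain ⟨θ, hθ⟩ := ih (substEqns (Function.update Tm.var x w) E)
      (Prod.Lex.toLex_lt_toLex.2 (.inl (hvars ▸ ncard_eqnsVars_substEqns_update_lt hx)))
      ⟨σ, mem_unifiers_substEqns_update hσ⟩
    exact ⟨_, hθ.of_substEqns_update hx⟩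
  cases t with
  | var x =>
    by_cases hu : u = .var x
    · have hE : unifiers ((.var x, u) :: E) = unifiers E := by simp [unifiers_cons, hu]
      rw [hE] at hσ ⊢
      exact ih E (eqnsMeasure_lt_of_subset (eqnsVars_subset_cons _) eqnsSize_lt_cons) ⟨σ, hσ⟩
    by_cases hx : u.HasVar x
    · exact absurd (unifiers_cons ▸ hσ).1 (Tm.subst_ne_of_hasVar σ hx hu)
    exact elim x u hx rfl rfl
  | app f ts =>
    cases u with
    | var x =>
      by_cases hx : (Tm.app f ts).HasVar x
      · rw [unifiers_cons_swap, unifiers_cons] at hσ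
        exact absurd hσ.1 (Tm.subst_ne_of_hasVar σ hx (by simp))
      exact elim x _ hx eqnsVars_cons_swap unifiers_cons_swap
    | app g ss =>
      obtain rfl : f = g := (Tm.app.inj (unifiers_cons ▸ hσ).1).1
      rw [unifiers_app_app] at hσ ⊢
      exact ih _ (eqnsMeasure_lt_of_subset (eqnsVars_app_app_subset f ts ss)
        (eqnsSize_app_app_lt f ts ss)) ⟨σ, hσ⟩

theorem Fm.exists_unifiers_eq (A B : Fm V Fn far Pr par) (h : ∃ σ, A.subst σ = B.subst σ) :
    ∃ E, {σ | A.subst σ = B.subst σ} = unifiers E := by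
  induction A generalizing B with
  | atom P ts =>
    cases B with
    | atom Q ss =>
      obtain ⟨σ, hσ⟩ := h
      obtain rfl : P = Q := (Fm.atom.inj hσ).1
      refine ⟨List.ofFn fun i => (ts i, ss i), ?_⟩
      ext σ
      simp [Fm.subst, unifiers, funext_iff]
    | _ => simp [Fm.subst] at h
  | not A ih =>
    cases B with
    | not B => simpa [Fm.subst] using ih B (by simpa [Fm.subst] using h)
    | _ => simp [Fm.subst] at h
  | and A₁ A₂ ih₁ ih₂ =>
    cases B with
    | and B₁ B₂ =>
      simp only [Fm.subst, Fm.and.injEq] at h ⊢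
      obtain ⟨E₁, hE₁⟩ := ih₁ B₁ (h.imp fun _ => And.left)
      obtain ⟨E₂, hE₂⟩ := ih₂ B₂ (h.imp fun _ => And.right)
      exact ⟨E₁ ++ E₂, by rw [unifiers_append, ← hE₁, ← hE₂]; rfl⟩
    | _ => simp [Fm.subst] at h
  | or A₁ A₂ ih₁ ih₂ =>
    cases B with
    | or B₁ B₂ =>
      simp only [Fm.subst, Fm.or.injEq] at h ⊢
      obtain ⟨E₁, hE₁⟩ := ih₁ B₁ (h.imp fun _ => And.left)
      obtain ⟨E₂, hE₂⟩ := ih₂ B₂ (h.imp fun _ => And.right)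
      exact ⟨E₁ ++ E₂, by rw [unifiers_append, ← hE₁, ← hE₂]; rfl⟩
    | _ => simp [Fm.subst] at h

theorem exists_unifiers_eq_setOf_forall (A : Fm V Fn far Pr par)
    (S : Multiset (Fm V Fn far Pr par)) (h : ∃ σ, ∀ B ∈ S, A.subst σ = B.subst σ) :
    ∃ E, {σ | ∀ B ∈ S, A.subst σ = B.subst σ} = unifiers E := by
  induction S using Multiset.induction_on with
  | empty => exact ⟨[], by simp [unifiers]⟩
  | cons B S ih =>
    simp only [Multiset.mem_cons, forall_eq_or_imp] at h ⊢
    obtain ⟨E₁, hE₁⟩ := A.exists_unifiers_eq B (h.imp fun _ => And.left)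
    obtain ⟨E₂, hE₂⟩ := ih (h.imp fun _ => And.right)
    exact ⟨E₁ ++ E₂, by rw [unifiers_append, ← hE₁, ← hE₂]; rfl⟩

theorem exists_isMGU (S : Multiset (Fm V Fn far Pr par)) (h : ∃ σ, Unifies σ S) :
    ∃ θ, IsMGU θ S := by
  rcases Multiset.empty_or_exists_mem S with rfl | ⟨A, hA⟩
  · exact ⟨Tm.var, by simp [Unifies], fun σ _ => ⟨σ, fun _ => rfl⟩⟩
  have hS : {σ | Unifies σ S} = {σ | ∀ B ∈ S, A.subst σ = B.subst σ} := by
    ext σ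
    exact ⟨fun hσ B hB => hσ A hA B hB, fun hσ B hB C hC => (hσ B hB).symm.trans (hσ C hC)⟩
  obtain ⟨E, hE⟩ := exists_unifiers_eq_setOf_forall A S (h.imp fun σ hσ B hB => hσ A hA B hB)
  obtain ⟨θ, hθ⟩ := exists_isMostGeneralIn_unifiers E (by rw [← hE, ← hS]; exact h)
  rw [← hE, ← hS] at hθ
  exact ⟨θ, hθ⟩

theorem IsMGU.comp_ren {θ : V → Tm V Fn far} {S : Multiset (Fm V Fn far Pr par)}
    (h : IsMGU θ S) {ρ : V → V} (hρ : Function.Injective ρ) :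
    IsMGU (fun v => (θ v).subst (ren ρ)) S := by
  refine ⟨fun A hA B hB => ?_, fun σ hσ => ?_⟩
  · rw [← Fm.subst_subst, ← Fm.subst_subst, h.1 A hA B hB]
  · obtain ⟨η, hη⟩ := h.2 σ hσ
    refine ⟨Function.extend ρ η Tm.var, fun v => ?_⟩
    rw [Tm.subst_subst, ← hη]
    exact congrArg (Tm.subst · (θ v)) (funext fun u => hρ.extend_apply η Tm.var u)

/-! ### Propositional resolution -/

section Propositional

/-- A clause `(Γ, Δ)` stands for the sequent `Γ ⊢ Δ`, i.e. the implication `⋀Γ → ⋁Δ`. -/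
abbrev Clause (α : Type) := Multiset α × Multiset α

variable {α β : Type}

namespace Clause

def Holds (g : α → Prop) (c : Clause α) : Prop :=
  (∀ a ∈ c.1, g a) → ∃ b ∈ c.2, g b

def map (f : α → β) (c : Clause α) : Clause β :=
  (c.1.map f, c.2.map f)

theorem not_holds_iff {g : α → Prop} {c : Clause α} :
    ¬ c.Holds g ↔ (∀ a ∈ c.1, g a) ∧ ∀ b ∈ c.2, ¬ g b := by
  simp [Holds]

theorem holds_add {g : α → Prop} {c d : Clause α} :
    (c + d).Holds g ↔ c.Holds g ∨ d.Holds g := by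
  simp only [Holds, Prod.fst_add, Prod.snd_add, Multiset.mem_add]
  grind

theorem map_add (f : α → β) (c d : Clause α) : (c + d).map f = c.map f + d.map f := by
  simp [map]

theorem image_map_add (f : α → β) (s t : Set (Clause α)) :
    map f '' (s + t) = map f '' s + map f '' t := by
  rw [← Set.image2_add, ← Set.image2_add]
  exact Set.image_image2_distrib (map_add f)

theorem forall_holds_add {g : α → Prop} {s t : Set (Clause α)} :
    (∀ c ∈ s + t, c.Holds g) ↔ (∀ c ∈ s, c.Holds g) ∨ ∀ d ∈ t, d.Holds g := by
  constructor
  · intro h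
    by_contra! hst
    obtain ⟨⟨c, hc, hcg⟩, d, hd, hdg⟩ := hst
    exact (holds_add.1 (h _ (Set.add_mem_add hc hd))).elim hcg hdg
  · rintro h _ ⟨c, hc, d, hd, rfl⟩
    exact holds_add.2 (h.imp (· c hc) (· d hd))

theorem map_map {γ : Type} (f : α → β) (g : β → γ) (c : Clause α) :
    (c.map f).map g = c.map (g ∘ f) := by
  simp [map]

theorem map_eq_zero {f : α → β} {c : Clause α} : c.map f = 0 ↔ c = 0 := by
  simp [map, Prod.ext_iff]

theorem isClopen_setOf_holds (c : Clause α) :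
    IsClopen {g : α → Bool | c.Holds (g · = true)} := by
  have hcoord (a : α) (b : Bool) : IsClopen {g : α → Bool | g a = b} :=
    (isClopen_discrete {b}).preimage (continuous_apply a)
  have : {g : α → Bool | c.Holds (g · = true)} =
      (⋃ a ∈ {a | a ∈ c.1}, {g | g a = false}) ∪ ⋃ b ∈ {b | b ∈ c.2}, {g | g b = true} := by
    ext g
    simp [Holds, imp_iff_not_or]
  rw [this]
  exact (c.1.finite_toSet.isClopen_biUnion fun a _ => hcoord a false).union
    (c.2.finite_toSet.isClopen_biUnion fun b _ => hcoord b true)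

end Clause

def Unsatisfiable (S : Set (Clause α)) : Prop :=
  ∀ g : α → Prop, ∃ c ∈ S, ¬ c.Holds g

theorem Unsatisfiable.exists_finset {S : Set (Clause α)} (hS : Unsatisfiable S) :
    ∃ T : Finset (Clause α), ↑T ⊆ S ∧ Unsatisfiable (T : Set (Clause α)) := by
  classical
  have hempty : Set.univ ∩ ⋂ c : S, {g : α → Bool | c.1.Holds (g · = true)} = ∅ := by
    ext g
    obtain ⟨c, hc, hcg⟩ := hS (g · = true)
    simp only [Set.mem_inter_iff, Set.mem_univ, Set.mem_iInter, true_and, Set.mem_ofPred_eq,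
      Set.mem_empty_iff_false, iff_false, not_forall, Subtype.exists]
    exact ⟨c, hc, hcg⟩
  obtain ⟨T, hT⟩ := isCompact_univ.elim_finite_subfamily_closed _
    (fun c => c.1.isClopen_setOf_holds.isClosed) hempty
  refine ⟨T.map (Function.Embedding.subtype _), by simp, fun g => ?_⟩
  have hg : (fun a => decide (g a)) ∉ Set.univ ∩ ⋂ c ∈ T, {g : α → Bool | c.1.Holds (g · = true)} :=
    hT ▸ Set.notMem_empty _
  simpa using hg

/-- Propositional resolution with factoring: the pivot may occur several times in each premise. -/
inductive PropDer (S : Set (Clause α)) : Clause α → Prop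
  | base {c : Clause α} : c ∈ S → PropDer S c
  | res {Γ Δ Θ Λ : Multiset α} {p : α} {k l : ℕ} : 0 < k → 0 < l →
      PropDer S (Γ, Δ + Multiset.replicate k p) → PropDer S (Multiset.replicate l p + Θ, Λ) →
      PropDer S (Γ + Θ, Δ + Λ)

theorem PropDer.trans {S T : Set (Clause α)} {c : Clause α} (h : PropDer T c)
    (hT : ∀ d ∈ T, PropDer S d) : PropDer S c := by
  induction h with
  | base hc => exact hT _ hc
  | res hk hl _ _ ih₁ ih₂ => exact .res hk hl ih₁ ih₂

theorem PropDer.mono {S T : Set (Clause α)} {c : Clause α} (h : PropDer T c) (hTS : T ⊆ S) :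
    PropDer S c :=
  h.trans fun _ hd => .base (hTS hd)

section DavisPutnam

variable [DecidableEq α] {S : Finset (Clause α)} {p : α}

def Clause.atoms (c : Clause α) : Finset α :=
  c.1.toFinset ∪ c.2.toFinset

def resolvent (p : α) (c d : Clause α) : Clause α :=
  (c.1 + d.1.filter (· ≠ p), c.2.filter (· ≠ p) + d.2)

theorem PropDer.resolvent {S : Set (Clause α)} {c d : Clause α} (hc : PropDer S c)
    (hd : PropDer S d) (hpc : p ∈ c.2) (hpd : p ∈ d.1) : PropDer S (resolvent p c d) := by
  have split (m : Multiset α) : m = m.filter (· ≠ p) + Multiset.replicate (m.count p) p := by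
    rw [← Multiset.filter_eq', ← Multiset.filter_add_not (· ≠ p) m]
    simp
  obtain ⟨Γ, Δ⟩ := c
  obtain ⟨Θ, Λ⟩ := d
  rw [split Δ] at hc
  rw [split Θ, add_comm] at hd
  exact .res (Multiset.count_pos.2 hpc) (Multiset.count_pos.2 hpd) hc hd

/-- Davis–Putnam elimination of `p`. Clauses containing `p` on both sides are not resolved, so
that `p` disappears. -/
def dpElim (p : α) (S : Finset (Clause α)) : Finset (Clause α) :=
  S.filter (p ∉ ·.atoms) ∪
    ((S.filter fun c => p ∈ c.2 ∧ p ∉ c.1) ×ˢ (S.filter fun d => p ∈ d.1 ∧ p ∉ d.2)).image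
      fun cd => resolvent p cd.1 cd.2

theorem mem_dpElim {e : Clause α} : e ∈ dpElim p S ↔ (e ∈ S ∧ p ∉ e.atoms) ∨
    ∃ c ∈ S, ∃ d ∈ S, (p ∈ c.2 ∧ p ∉ c.1) ∧ (p ∈ d.1 ∧ p ∉ d.2) ∧ resolvent p c d = e := by
  simp only [dpElim, Finset.mem_union, Finset.mem_filter, Finset.mem_image, Finset.mem_product]
  constructor
  · rintro (h | ⟨⟨c, d⟩, ⟨⟨hc, hpc⟩, hd, hpd⟩, rfl⟩)
    exacts [.inl h, .inr ⟨c, hc, d, hd, hpc, hpd, rfl⟩]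
  · rintro (h | ⟨c, hc, d, hd, hpc, hpd, rfl⟩)
    exacts [.inl h, .inr ⟨(c, d), ⟨⟨hc, hpc⟩, hd, hpd⟩, rfl⟩]

theorem propDer_of_mem_dpElim {e : Clause α} (he : e ∈ dpElim p S) : PropDer S e := by
  rcases mem_dpElim.1 he with ⟨he, -⟩ | ⟨c, hc, d, hd, ⟨hpc, -⟩, ⟨hpd, -⟩, rfl⟩
  · exact .base he
  · exact (PropDer.base hc).resolvent (.base hd) hpc hpd

theorem atoms_dpElim_subset :
    (dpElim p S).biUnion Clause.atoms ⊆ (S.biUnion Clause.atoms).erase p := by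
  intro a ha
  obtain ⟨e, he, hae⟩ := Finset.mem_biUnion.1 ha
  simp only [Finset.mem_erase, Finset.mem_biUnion]
  rcases mem_dpElim.1 he with ⟨he, hpe⟩ | ⟨c, hc, d, hd, ⟨-, hpc⟩, ⟨-, hpd⟩, rfl⟩
  · exact ⟨fun h => hpe (h ▸ hae), e, he, hae⟩
  · simp only [Clause.atoms, resolvent, Finset.mem_union, Multiset.mem_toFinset,
      Multiset.mem_add, Multiset.mem_filter] at hae hpc hpd ⊢
    rcases hae with (h | ⟨h, hne⟩) | (⟨h, hne⟩ | h)
    · exact ⟨fun hap => hpc (hap ▸ h), c, hc, .inl h⟩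
    · exact ⟨hne, d, hd, .inl h⟩
    · exact ⟨hne, c, hc, .inr h⟩
    · exact ⟨fun hap => hpd (hap ▸ h), d, hd, .inr h⟩

/-- Forcing `p` true, resp. false, in `g` falsifies some clause of `S`; these two clauses are
either `p`-free or resolve on `p` to a clause false under `g`. -/
theorem Unsatisfiable.dpElim (hS : Unsatisfiable (S : Set (Clause α))) :
    Unsatisfiable (dpElim p S : Set (Clause α)) := by
  intro g
  obtain ⟨cT, hcT, hT⟩ := hS fun a => a = p ∨ g a
  obtain ⟨cF, hcF, hF⟩ := hS fun a => a ≠ p ∧ g a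
  rw [Clause.not_holds_iff] at hT hF
  have hpT : p ∉ cT.2 := fun h => hT.2 p h (.inl rfl)
  have hpF : p ∉ cF.1 := fun h => (hF.1 p h).1 rfl
  simp only [Finset.mem_coe, mem_dpElim, Clause.atoms, Finset.mem_union, Multiset.mem_toFinset]
  by_cases hT1 : p ∈ cT.1
  · by_cases hF2 : p ∈ cF.2
    · refine ⟨_, .inr ⟨cF, hcF, cT, hcT, ⟨hF2, hpF⟩, ⟨hT1, hpT⟩, rfl⟩, ?_⟩
      simp only [Clause.not_holds_iff, resolvent, Multiset.mem_add, Multiset.mem_filter]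
      grind
    · refine ⟨cF, .inl ⟨hcF, by tauto⟩, Clause.not_holds_iff.2 ?_⟩
      grind
  · refine ⟨cT, .inl ⟨hcT, by tauto⟩, Clause.not_holds_iff.2 ?_⟩
    grind

theorem PropDer.zero_of_unsatisfiable_finset (S : Finset (Clause α))
    (hS : Unsatisfiable (S : Set (Clause α))) : PropDer (S : Set (Clause α)) 0 := by
  induction hn : (S.biUnion Clause.atoms).card using Nat.strong_induction_on generalizing S with
  | _ n ih =>
  obtain ⟨p, hp⟩ | hempty := (S.biUnion Clause.atoms).eq_empty_or_nonempty.symm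
  · have hlt : ((dpElim p S).biUnion Clause.atoms).card < n :=
      hn ▸ (Finset.card_le_card atoms_dpElim_subset).trans_lt (Finset.card_erase_lt_of_mem hp)
    exact (ih _ hlt _ hS.dpElim rfl).trans fun _ he => propDer_of_mem_dpElim he
  · obtain ⟨c, hc, -⟩ := hS fun _ => True
    have : c = 0 := by
      have h a : a ∉ c.atoms := fun ha => Finset.eq_empty_iff_forall_notMem.1 hempty a
        (Finset.mem_biUnion.2 ⟨c, hc, ha⟩)
      simp_all [Clause.atoms, Prod.ext_iff, Multiset.eq_zero_iff_forall_notMem]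
    exact .base (this ▸ hc)

end DavisPutnam

theorem PropDer.zero_of_unsatisfiable {S : Set (Clause α)} (hS : Unsatisfiable S) :
    PropDer S 0 := by
  classical
  obtain ⟨T, hTS, hT⟩ := hS.exists_finset
  exact (PropDer.zero_of_unsatisfiable_finset T hT).mono hTS

end Propositional

/-! ### Clausal form -/

mutual

/-- The clauses produced from `⊢ F` by the logical rules of `RPL₀`; their conjunction is
equivalent to `F`. -/
def Fm.cnf : Fm V Fn far Pr par → Set (Clause (Fm V Fn far Pr par))
  | .atom P ts => {(0, {.atom P ts})}
  | .not A => A.cnfNeg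
  | .and A B => A.cnf ∪ B.cnf
  | .or A B => A.cnf + B.cnf

/-- The clauses produced from `F ⊢`; their conjunction is equivalent to `¬F`. -/
def Fm.cnfNeg : Fm V Fn far Pr par → Set (Clause (Fm V Fn far Pr par))
  | .atom P ts => {({.atom P ts}, 0)}
  | .not A => A.cnf
  | .and A B => A.cnfNeg + B.cnfNeg
  | .or A B => A.cnfNeg ∪ B.cnfNeg

end

theorem Fm.der_cnf_and_der_cnfNeg {Ax : Set (Fm V Fn far Pr par)} (F : Fm V Fn far Pr par) :
    (∀ Γ Δ, Der Ax Γ (F ::ₘ Δ) → ∀ c ∈ F.cnf, Der Ax (c.1 + Γ) (c.2 + Δ)) ∧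
    (∀ Γ Δ, Der Ax (F ::ₘ Γ) Δ → ∀ c ∈ F.cnfNeg, Der Ax (c.1 + Γ) (c.2 + Δ)) := by
  induction F with
  | atom P ts =>
    constructor
    all_goals
      rintro Γ Δ h c rfl
      simpa only [zero_add, Multiset.singleton_add] using h
  | not A ih =>
    exact ⟨fun Γ Δ h => ih.2 Γ Δ h.negr, fun Γ Δ h => ih.1 Γ Δ h.negl⟩
  | and A B ihA ihB =>
    refine ⟨fun Γ Δ h c hc => hc.elim (ihA.1 Γ Δ h.andr1 c) (ihB.1 Γ Δ h.andr2 c), ?_⟩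
    rintro Γ Δ h _ ⟨c, hc, d, hd, rfl⟩
    have hA := ihA.2 (B ::ₘ Γ) Δ h.andl c hc
    rw [Multiset.add_cons] at hA
    simpa only [Prod.fst_add, Prod.snd_add, add_assoc, add_left_comm d.1, add_left_comm d.2]
      using ihB.2 _ _ hA d hd
  | or A B ihA ihB =>
    refine ⟨?_, fun Γ Δ h c hc => hc.elim (ihA.2 Γ Δ h.orl1 c) (ihB.2 Γ Δ h.orl2 c)⟩
    rintro Γ Δ h _ ⟨c, hc, d, hd, rfl⟩
    have hA := ihA.1 Γ (B ::ₘ Δ) h.orr c hc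
    rw [Multiset.add_cons] at hA
    simpa only [Prod.fst_add, Prod.snd_add, add_assoc, add_left_comm d.1, add_left_comm d.2]
      using ihB.1 _ _ hA d hd

theorem der_of_mem_cnf {Ax : Set (Fm V Fn far Pr par)} {F : Fm V Fn far Pr par} (hF : F ∈ Ax)
    {c : Clause (Fm V Fn far Pr par)} (hc : c ∈ F.cnf) : Der Ax c.1 c.2 := by
  simpa using F.der_cnf_and_der_cnfNeg.1 0 0 (Der.ax hF) c hc

theorem Fm.cnf_subst_and_cnfNeg_subst (σ : V → Tm V Fn far) (F : Fm V Fn far Pr par) :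
    (F.subst σ).cnf = Clause.map (Fm.subst σ) '' F.cnf ∧
    (F.subst σ).cnfNeg = Clause.map (Fm.subst σ) '' F.cnfNeg := by
  induction F with
  | atom P ts => simp [Fm.subst, Fm.cnf, Fm.cnfNeg, Clause.map]
  | not A ih => exact ih.symm
  | and A B ihA ihB =>
    simp only [Fm.subst, Fm.cnf, Fm.cnfNeg, Set.image_union, Clause.image_map_add, ihA.1, ihA.2,
      ihB.1, ihB.2, and_self]
  | or A B ihA ihB =>
    simp only [Fm.subst, Fm.cnf, Fm.cnfNeg, Set.image_union, Clause.image_map_add, ihA.1, ihA.2,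
      ihB.1, ihB.2, and_self]

def Fm.propEval (g : Fm V Fn far Pr par → Prop) : Fm V Fn far Pr par → Prop
  | .atom P ts => g (.atom P ts)
  | .not A => ¬ A.propEval g
  | .and A B => A.propEval g ∧ B.propEval g
  | .or A B => A.propEval g ∨ B.propEval g

theorem Fm.propEval_iff_cnf (g : Fm V Fn far Pr par → Prop) (F : Fm V Fn far Pr par) :
    (F.propEval g ↔ ∀ c ∈ F.cnf, c.Holds g) ∧ (¬ F.propEval g ↔ ∀ c ∈ F.cnfNeg, c.Holds g) := by
  induction F with
  | atom P ts => simp [Fm.propEval, Fm.cnf, Fm.cnfNeg, Clause.Holds]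
  | not A ih => simpa [Fm.propEval, Fm.cnf, Fm.cnfNeg] using ih.symm
  | and A B ihA ihB =>
    simp only [Fm.propEval, Fm.cnf, Fm.cnfNeg, Clause.forall_holds_add, Set.mem_union, or_imp,
      forall_and, ← ihA.1, ← ihA.2, ← ihB.1, ← ihB.2, not_and_or, and_self]
  | or A B ihA ihB =>
    simp only [Fm.propEval, Fm.cnf, Fm.cnfNeg, Clause.forall_holds_add, Set.mem_union, or_imp,
      forall_and, ← ihA.1, ← ihA.2, ← ihB.1, ← ihB.2, not_or, and_self]

theorem Tm.eval_app (σ : V → Tm V Fn far) (t : Tm V Fn far) : t.eval Tm.app σ = t.subst σ := by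
  induction t with
  | var v => rfl
  | app f ts ih => exact congrArg _ (funext ih)

theorem Fm.truth_app_iff (g : Fm V Fn far Pr par → Prop) (σ : V → Tm V Fn far)
    (F : Fm V Fn far Pr par) :
    F.truth Tm.app (fun P ts => g (.atom P ts)) σ ↔ (F.subst σ).propEval g := by
  induction F with
  | atom P ts => simp [Fm.truth, Fm.subst, Fm.propEval, Tm.eval_app]
  | not A ih => simp [Fm.truth, Fm.subst, Fm.propEval, ih]
  | and A B ihA ihB => simp [Fm.truth, Fm.subst, Fm.propEval, ihA, ihB]
  | or A B ihA ihB => simp [Fm.truth, Fm.subst, Fm.propEval, ihA, ihB]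

/-! ### Lifting -/

theorem exists_injective_ren_disjoint (V : Type) [Infinite V] :
    ∃ ρ₁ ρ₂ : V → V, Function.Injective ρ₁ ∧ Function.Injective ρ₂ ∧ ∀ v w, ρ₁ v ≠ ρ₂ w := by
  obtain ⟨e⟩ : Nonempty (V ⊕ V ≃ V) := Cardinal.eq.1 <| by
    simp [Cardinal.add_eq_self (Cardinal.aleph0_le_mk V)]
  exact ⟨e ∘ .inl, e ∘ .inr, e.injective.comp Sum.inl_injective,
    e.injective.comp Sum.inr_injective, fun v w h => Sum.inl_ne_inr (e.injective h)⟩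

theorem exists_subst_comp_eq {ρ₁ ρ₂ : V → V} (hρ₁ : Function.Injective ρ₁)
    (hρ₂ : Function.Injective ρ₂) (hdisj : ∀ v w, ρ₁ v ≠ ρ₂ w) (τ₁ τ₂ : V → Tm V Fn far) :
    ∃ σ : V → Tm V Fn far, σ ∘ ρ₁ = τ₁ ∧ σ ∘ ρ₂ = τ₂ :=
  ⟨Function.extend ρ₁ τ₁ (Function.extend ρ₂ τ₂ Tm.var), funext (hρ₁.extend_apply _ _),
    funext fun v => (Function.extend_apply' _ _ _ fun ⟨u, hu⟩ => hdisj u v hu).trans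
      (hρ₂.extend_apply _ _ _)⟩

theorem der_res_of_disjoint_ren {Ax : Set (Fm V Fn far Pr par)}
    {Γ Δ As Bs Θ Λ : Multiset (Fm V Fn far Pr par)} (hAs : As ≠ 0) (hBs : Bs ≠ 0)
    {ρ₁ ρ₂ : V → V} (hdisj : ∀ v w, ρ₁ v ≠ ρ₂ w) {θ : V → Tm V Fn far}
    (hθ : IsMGU θ (As.map (Fm.subst (ren ρ₁)) + Bs.map (Fm.subst (ren ρ₂))))
    (h₁ : Der Ax (Γ.map (Fm.subst (ren ρ₁))) ((Δ + As).map (Fm.subst (ren ρ₁))))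
    (h₂ : Der Ax ((Bs + Θ).map (Fm.subst (ren ρ₂))) (Λ.map (Fm.subst (ren ρ₂)))) :
    Der Ax ((Γ.map (Fm.subst (ren ρ₁)) + Θ.map (Fm.subst (ren ρ₂))).map (Fm.subst θ))
      ((Δ.map (Fm.subst (ren ρ₁)) + Λ.map (Fm.subst (ren ρ₂))).map (Fm.subst θ)) := by
  have hvars : ∀ v : V, (∃ A ∈ As.map (Fm.subst (ren ρ₁)), A.HasVar v) →
      ¬ ∃ B ∈ Bs.map (Fm.subst (ren ρ₂)), B.HasVar v := by
    rintro v ⟨_, hA, hvA⟩ ⟨_, hB, hvB⟩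
    obtain ⟨A, -, rfl⟩ := Multiset.mem_map.1 hA
    obtain ⟨B, -, rfl⟩ := Multiset.mem_map.1 hB
    obtain ⟨a, rfl⟩ := Fm.mem_range_of_hasVar_subst_ren hvA
    obtain ⟨b, hb⟩ := Fm.mem_range_of_hasVar_subst_ren hvB
    exact hdisj a b hb.symm
  rw [Multiset.map_add] at h₁ h₂
  rw [Multiset.map_add, Multiset.map_add]
  exact Der.res _ _ θ (by simpa using hAs) (by simpa using hBs) hvars hθ h₁ h₂

/-- Quantifying over all injective renamings of `c₀` is what lets premises be renamed apart. -/
def Liftable (Ax : Set (Fm V Fn far Pr par)) (c : Clause (Fm V Fn far Pr par)) : Prop :=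
  ∃ c₀ : Clause (Fm V Fn far Pr par),
    (∀ ρ : V → V, Function.Injective ρ →
      Der Ax (c₀.map (Fm.subst (ren ρ))).1 (c₀.map (Fm.subst (ren ρ))).2) ∧
    ∃ τ, c₀.map (Fm.subst τ) = c

theorem liftable_of_mem_cnf {Ax : Set (Fm V Fn far Pr par)} {F : Fm V Fn far Pr par}
    (hAx : ∀ ρ : V → V, Function.Injective ρ → F.subst (ren ρ) ∈ Ax) {σ : V → Tm V Fn far}
    {c : Clause (Fm V Fn far Pr par)} (hc : c ∈ (F.subst σ).cnf) : Liftable Ax c := by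
  rw [(F.cnf_subst_and_cnfNeg_subst σ).1] at hc
  obtain ⟨c₀, hc₀, rfl⟩ := hc
  refine ⟨c₀, fun ρ hρ => der_of_mem_cnf (hAx ρ hρ) ?_, σ, rfl⟩
  rw [(F.cnf_subst_and_cnfNeg_subst _).1]
  exact ⟨c₀, hc₀, rfl⟩

/-- The lifting lemma: rename the two premises apart, merge their instantiating substitutions
into one unifier of the resolved atoms, and resolve with a most general unifier instead. -/
theorem Liftable.res [Infinite V] {Ax : Set (Fm V Fn far Pr par)}
    {Γ Δ Θ Λ : Multiset (Fm V Fn far Pr par)} {p : Fm V Fn far Pr par} {k l : ℕ}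
    (hk : 0 < k) (hl : 0 < l) (h₁ : Liftable Ax (Γ, Δ + Multiset.replicate k p))
    (h₂ : Liftable Ax (Multiset.replicate l p + Θ, Λ)) : Liftable Ax (Γ + Θ, Δ + Λ) := by
  obtain ⟨⟨Γ₁, D₁⟩, hder₁, τ₁, hτ₁⟩ := h₁
  obtain ⟨⟨G₂, Λ₂⟩, hder₂, τ₂, hτ₂⟩ := h₂
  simp only [Clause.map, Prod.mk.injEq] at hτ₁ hτ₂
  obtain ⟨Δ₁, As, rfl, hΔ₁, hAs⟩ := Multiset.exists_eq_add_of_map_eq_add hτ₁.2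
  obtain ⟨Bs, Θ₂, rfl, hBs, hΘ₂⟩ := Multiset.exists_eq_add_of_map_eq_add hτ₂.1
  obtain ⟨ρ₁, ρ₂, hρ₁, hρ₂, hdisj⟩ := exists_injective_ren_disjoint V
  obtain ⟨σ, hσ₁, hσ₂⟩ := exists_subst_comp_eq hρ₁ hρ₂ hdisj τ₁ τ₂
  set S := As.map (Fm.subst (ren ρ₁)) + Bs.map (Fm.subst (ren ρ₂))
  have hSp : ∀ A ∈ S, A.subst σ = p := by
    simp only [S, Multiset.mem_add, Multiset.mem_map]
    rintro _ (⟨A, hA, rfl⟩ | ⟨A, hA, rfl⟩)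
    · rw [Fm.subst_ren_subst, hσ₁]
      exact Multiset.eq_of_mem_replicate (hAs ▸ Multiset.mem_map_of_mem _ hA)
    · rw [Fm.subst_ren_subst, hσ₂]
      exact Multiset.eq_of_mem_replicate (hBs ▸ Multiset.mem_map_of_mem _ hA)
  have hσS : Unifies σ S := fun A hA B hB => (hSp A hA).trans (hSp B hB).symm
  obtain ⟨θ, hθ⟩ := exists_isMGU S ⟨σ, hσS⟩
  refine ⟨(Clause.map (Fm.subst (ren ρ₁)) (Γ₁, Δ₁) +
      Clause.map (Fm.subst (ren ρ₂)) (Θ₂, Λ₂)).map (Fm.subst θ), fun ρ hρ => ?_, ?_⟩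
  · have hAs0 : As ≠ 0 := by
      rintro rfl
      exact hk.ne' (by simpa using congrArg Multiset.card hAs.symm)
    have hBs0 : Bs ≠ 0 := by
      rintro rfl
      exact hl.ne' (by simpa using congrArg Multiset.card hBs.symm)
    simpa [Clause.map, Fm.subst_subst, ren, Tm.subst] using
      der_res_of_disjoint_ren hAs0 hBs0 hdisj (hθ.comp_ren hρ) (hder₁ ρ₁ hρ₁) (hder₂ ρ₂ hρ₂)
  · obtain ⟨η, hη⟩ := hθ.2 σ hσS
    refine ⟨η, ?_⟩
    rw [Clause.map_map, Fm.subst_comp_subst, funext hη, Clause.map_add, Clause.map_map,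
      Clause.map_map, Fm.subst_comp_subst, Fm.subst_comp_subst]
    change Clause.map (Fm.subst (σ ∘ ρ₁)) _ + Clause.map (Fm.subst (σ ∘ ρ₂)) _ = _
    rw [hσ₁, hσ₂]
    simp [Clause.map, hτ₁.1, hΔ₁, hΘ₂, hτ₂.2]

theorem PropDer.liftable [Infinite V] {Ax : Set (Fm V Fn far Pr par)} {F : Fm V Fn far Pr par}
    (hAx : ∀ ρ : V → V, Function.Injective ρ → F.subst (ren ρ) ∈ Ax)
    {c : Clause (Fm V Fn far Pr par)} (h : PropDer (⋃ σ, (F.subst σ).cnf) c) :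
    Liftable Ax c := by
  induction h with
  | base hc =>
    obtain ⟨σ, hc⟩ := Set.mem_iUnion.1 hc
    exact liftable_of_mem_cnf hAx hc
  | res hk hl _ _ ih₁ ih₂ => exact .res hk hl ih₁ ih₂

end RPL0

open RPL0

/-- Refutational completeness of `RPL₀`: for every quantifier-free first-order
formula `F` whose universal closure is unsatisfiable, the empty sequent `⊢` is derivable in
`RPL₀` from axioms of the form `⊢ Fϑ` where `ϑ` is a renaming of the variables of `F`. -/
theorem statement11 (V Fn Pr : Type) [Infinite V] (far : Fn → ℕ) (par : Pr → ℕ)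
    (F : Fm V Fn far Pr par)
    (hunsat : ∀ (α : Type) (_ : Nonempty α) (fI : (f : Fn) → (Fin (far f) → α) → α)
      (pI : (P : Pr) → (Fin (par P) → α) → Prop), ¬ ∀ v : V → α, Fm.truth fI pI v F) :
    Der {G | ∃ ρ : V → V, Function.Injective ρ ∧ G = F.subst fun v => Tm.var (ρ v)} 0 0 := by
  have hground : Unsatisfiable (⋃ σ : V → Tm V Fn far, (F.subst σ).cnf) := by
    intro g
    obtain ⟨σ, hσ⟩ : ∃ σ, ¬ F.truth Tm.app (fun P ts => g (.atom P ts)) σ := by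
      simpa using hunsat _ ⟨.var (Classical.arbitrary V)⟩ Tm.app fun P ts => g (.atom P ts)
    rw [Fm.truth_app_iff, ((F.subst σ).propEval_iff_cnf g).1] at hσ
    obtain ⟨c, hc, hcg⟩ := not_forall₂.1 hσ
    exact ⟨c, Set.mem_iUnion.2 ⟨σ, hc⟩, hcg⟩
  obtain ⟨c₀, hder, τ, hτ⟩ := (PropDer.zero_of_unsatisfiable hground).liftable
    (Ax := {G | ∃ ρ : V → V, Function.Injective ρ ∧ G = F.subst fun v => Tm.var (ρ v)})
    fun ρ hρ => ⟨ρ, hρ, rfl⟩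
  rw [Clause.map_eq_zero] at hτ
  simpa [hτ, Clause.map] using hder id Function.injective_id
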